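/- Strong duality: if x̄ is an efficient solution to minimizing Lx over 𝒜 = {x ∈ ℝ^n_+ : Ax = b} with respect to K, then there exists (λ̄, Ū, v̄) ∈ ℬ = {(λ, U, v) ∈ K*⁰ × ℝ^{k×m} × ℝ^k : λᵀv = 0, (L − UA)ᵀλ ∈ ℝ^n_+} which is an efficient (maximal) solution of the dual problem of maximizing Ub + v over ℬ with respect to K, and Lx̄ = Ūb + v̄. -/

import Mathlib

/-!
A finitely generated cone is closed (Carathéodory's reduction to linearly independent generators),
so the bipolar theorem applies to it. Efficiency of `x̄` says that the closed cone `P` generated by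
`L (𝒜 - x̄)` and the recession directions meets `-K` only in `0`. Since `K` is pointed, its dual
cone `K*` has interior; if `int K*` missed `P*`, a separating functional would lie in `P ∩ -K`
by bipolarity, hence vanish. A point `λ̄ ∈ int K* ∩ P*` is strictly positive on `K \ {0}`, and
`x̄` minimizes `λ̄ᵀ L x` over `𝒜`. Linear programming duality then gives `y` with
`Aᵀ y ≤ Lᵀ λ̄` and `bᵀ y = λ̄ᵀ L x̄`; choosing `Ū` with `Ūᵀ λ̄ = y` and `v̄ = L x̄ - Ū b` gives a
dual feasible point of value `L x̄`, which is maximal by weak duality.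
-/

open Matrix Set Topology

section FinitelyGeneratedCone

variable {κ E : Type*}

def nonnegSupportedOn (S : Finset κ) : Set (κ → ℝ) := {x | 0 ≤ x ∧ ∀ j ∉ S, x j = 0}

lemma nonnegSupportedOn_mono {S T : Finset κ} (h : S ⊆ T) :
    nonnegSupportedOn S ⊆ nonnegSupportedOn T :=
  fun _ hx => ⟨hx.1, fun j hj => hx.2 j (fun hjS => hj (h hjS))⟩

variable [Fintype κ] [NormedAddCommGroup E] [NormedSpace ℝ E]

lemma isClosed_image_nonnegSupportedOn_of_injective (f : (κ → ℝ) →ₗ[ℝ] E) (S : Finset κ)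
    (hf : ∀ x : κ → ℝ, (∀ j ∉ S, x j = 0) → f x = 0 → x = 0) :
    IsClosed (f '' nonnegSupportedOn S) := by
  set V : Submodule ℝ (κ → ℝ) := Submodule.pi (↑S)ᶜ fun _ => ⊥
  have hker : LinearMap.ker (f ∘ₗ V.subtype) = ⊥ :=
    LinearMap.ker_eq_bot'.2 fun x hx => Subtype.ext <|
      hf x (fun j hj => (Submodule.mem_pi.1 x.2) j hj) hx
  have himage : f '' nonnegSupportedOn S = (f ∘ₗ V.subtype) '' {x | 0 ≤ (x : κ → ℝ)} := by
    ext y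
    constructor
    · rintro ⟨x, ⟨hx, hxS⟩, rfl⟩
      exact ⟨⟨x, Submodule.mem_pi.2 fun j hj => hxS j hj⟩, hx, rfl⟩
    · rintro ⟨x, hx, rfl⟩
      exact ⟨x, ⟨hx, fun j hj => (Submodule.mem_pi.1 x.2) j hj⟩, rfl⟩
  rw [himage]
  exact (LinearMap.isClosedEmbedding_of_injective hker).isClosedMap _
    (isClosed_le continuous_const continuous_subtype_val)


lemma image_nonnegSupportedOn_subset_biUnion_erase [DecidableEq κ] (f : (κ → ℝ) →ₗ[ℝ] E)
    {S : Finset κ} {g : κ → ℝ} (hgS : ∀ j ∉ S, g j = 0) (hg : f g = 0) (hpos : ∃ j, 0 < g j) :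
    f '' nonnegSupportedOn S ⊆ ⋃ j ∈ S, f '' nonnegSupportedOn (S.erase j) := by
  rintro _ ⟨x, ⟨hx, hxS⟩, rfl⟩
  obtain ⟨j₀, hj₀⟩ := hpos
  obtain ⟨j₁, hj₁T, hj₁⟩ := (Finset.univ.filter fun j => 0 < g j).exists_min_image
    (fun j => x j / g j) ⟨j₀, Finset.mem_filter.2 ⟨Finset.mem_univ _, hj₀⟩⟩
  have hg₁ : 0 < g j₁ := (Finset.mem_filter.1 hj₁T).2
  have hj₁S : j₁ ∈ S := by_contra fun h => hg₁.ne' (hgS j₁ h)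
  set t := x j₁ / g j₁
  have ht : 0 ≤ t := div_nonneg (hx j₁) hg₁.le
  refine mem_biUnion hj₁S ⟨x - t • g, ⟨fun j => ?_, fun j hj => ?_⟩, by simp [hg]⟩
  · suffices t * g j ≤ x j by simpa using this
    rcases lt_or_ge 0 (g j) with hgj | hgj
    · exact (le_div_iff₀ hgj).1 (hj₁ j (Finset.mem_filter.2 ⟨Finset.mem_univ _, hgj⟩))
    · exact (mul_nonpos_of_nonneg_of_nonpos ht hgj).trans (hx j)
  · rcases eq_or_ne j j₁ with rfl | hne
    · simp [t, div_mul_cancel₀ _ hg₁.ne']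
    · have hjS : j ∉ S := fun h => hj (Finset.mem_erase.2 ⟨hne, h⟩)
      simp [hxS j hjS, hgS j hjS]

lemma isClosed_image_nonnegSupportedOn [DecidableEq κ] (f : (κ → ℝ) →ₗ[ℝ] E)
    (S : Finset κ) : IsClosed (f '' nonnegSupportedOn S) := by
  induction S using Finset.strongInduction with
  | H S ih =>
  by_cases hf : ∀ x : κ → ℝ, (∀ j ∉ S, x j = 0) → f x = 0 → x = 0
  · exact isClosed_image_nonnegSupportedOn_of_injective f S hf
  push Not at hf
  obtain ⟨g, hgS, hg, hg0⟩ := hf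
  obtain ⟨j, hj⟩ := Function.ne_iff.1 hg0
  have hunion : f '' nonnegSupportedOn S = ⋃ j ∈ S, f '' nonnegSupportedOn (S.erase j) := by
    refine (Subset.antisymm ?_ (iUnion₂_subset fun j _ =>
      image_mono (nonnegSupportedOn_mono (S.erase_subset j))))
    rcases (Ne.lt_or_gt hj) with hneg | hpos
    · exact image_nonnegSupportedOn_subset_biUnion_erase f (g := -g)
        (fun j hj => by simp [hgS j hj]) (by simp [hg]) ⟨j, by simpa using hneg⟩
    · exact image_nonnegSupportedOn_subset_biUnion_erase f hgS hg ⟨j, hpos⟩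
  rw [hunion]
  exact isClosed_biUnion_finset fun j hj => ih _ (S.erase_ssubset hj)

theorem isClosed_image_nonneg (f : (κ → ℝ) →ₗ[ℝ] E) : IsClosed (f '' {x | 0 ≤ x}) := by
  classical
  simpa [nonnegSupportedOn] using isClosed_image_nonnegSupportedOn f Finset.univ

end FinitelyGeneratedCone

structure IsClosedCone {ι : Type*} (C : Set (ι → ℝ)) : Prop where
  isClosed : IsClosed C
  convex : Convex ℝ C
  smul_mem : ∀ c : ℝ, 0 ≤ c → ∀ x ∈ C, c • x ∈ C
  zero_mem : (0 : ι → ℝ) ∈ C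

lemma nonneg_of_forall_le_of_smul_mem {E : Type*} [AddCommGroup E] [Module ℝ E] {C : Set E}
    (hC : ∀ c : ℝ, 0 ≤ c → ∀ x ∈ C, c • x ∈ C) (f : E →ₗ[ℝ] ℝ) {u : ℝ}
    (hu : ∀ x ∈ C, u ≤ f x) {x : E} (hx : x ∈ C) : 0 ≤ f x := by
  by_contra! hfx
  have hc : (|u| + 1) / -f x * f x = -(|u| + 1) := by field_simp [hfx.ne]
  have := hu _ (hC ((|u| + 1) / -f x) (div_nonneg (by positivity) (by linarith)) x hx)
  rw [map_smul, smul_eq_mul, hc] at this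
  linarith [neg_abs_le u]

section DotDual

variable {ι : Type*} [Fintype ι]

def dotDual (s : Set (ι → ℝ)) : Set (ι → ℝ) := {l | ∀ u ∈ s, 0 ≤ l ⬝ᵥ u}

lemma zero_mem_dotDual (s : Set (ι → ℝ)) : 0 ∈ dotDual s := fun u _ => by simp

lemma smul_mem_dotDual {s : Set (ι → ℝ)} (c : ℝ) (hc : 0 ≤ c) (l : ι → ℝ) (hl : l ∈ dotDual s) :
    c • l ∈ dotDual s :=
  fun u hu => by simpa [smul_dotProduct] using mul_nonneg hc (hl u hu)

lemma convex_dotDual (s : Set (ι → ℝ)) : Convex ℝ (dotDual s) :=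
  fun l₁ h₁ l₂ h₂ a b ha hb _ u hu => by
    simpa [add_dotProduct, smul_dotProduct] using
      add_nonneg (mul_nonneg ha (h₁ u hu)) (mul_nonneg hb (h₂ u hu))

lemma exists_dotProduct_eq (f : (ι → ℝ) →ₗ[ℝ] ℝ) : ∃ ν : ι → ℝ, ∀ x, f x = ν ⬝ᵥ x := by
  classical
  exact ⟨(dotProductEquiv ℝ ι).symm f, fun x => by
    rw [← LinearMap.congr_fun ((dotProductEquiv ℝ ι).apply_symm_apply f) x]; rfl⟩

namespace IsClosedCone

variable {C : Set (ι → ℝ)}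

lemma exists_mem_dotDual_dotProduct_neg (hC : IsClosedCone C) {p : ι → ℝ} (hp : p ∉ C) :
    ∃ ν ∈ dotDual C, ν ⬝ᵥ p < 0 := by
  obtain ⟨f, u, hfC, hfp⟩ := geometric_hahn_banach_closed_point hC.convex hC.isClosed hp
  obtain ⟨ν, hν⟩ := exists_dotProduct_eq (f : (ι → ℝ) →ₗ[ℝ] ℝ)
  have hu : 0 < u := by simpa using hfC 0 hC.zero_mem
  refine ⟨-ν, fun x hx => ?_, ?_⟩
  · have := nonneg_of_forall_le_of_smul_mem hC.smul_mem (-(f : (ι → ℝ) →ₗ[ℝ] ℝ))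
      (fun y hy => neg_le_neg (hfC y hy).le) hx
    simpa [hν] using this
  · have := hν p
    simp only [ContinuousLinearMap.coe_coe] at this
    simp only [neg_dotProduct]
    linarith

lemma mem_of_forall_dotDual (hC : IsClosedCone C) {p : ι → ℝ}
    (hp : ∀ l ∈ dotDual C, 0 ≤ l ⬝ᵥ p) : p ∈ C := by
  by_contra h
  obtain ⟨ν, hν, hνp⟩ := hC.exists_mem_dotDual_dotProduct_neg h
  exact (hp ν hν).not_gt hνp

lemma interior_dotDual_nonempty (hC : IsClosedCone C) (hsalient : ∀ x ∈ C, -x ∈ C → x = 0) :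
    (interior (dotDual C)).Nonempty := by
  rw [(convex_dotDual C).interior_nonempty_iff_affineSpan_eq_top,
    AffineSubspace.affineSpan_eq_top_iff_vectorSpan_eq_top_of_nonempty _ _ _
      ⟨0, zero_mem_dotDual C⟩, eq_top_iff]
  refine le_trans ?_ (Submodule.span_le.2 fun l hl => by
    simpa using vsub_mem_vectorSpan ℝ hl (zero_mem_dotDual C))
  by_contra hspan
  obtain ⟨f, hf0, hker⟩ :=
    Submodule.exists_le_ker_of_lt_top _ (lt_top_iff_ne_top.2 fun h => hspan h.ge)
  obtain ⟨ν, hν⟩ := exists_dotProduct_eq f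
  have horth : ∀ l ∈ dotDual C, l ⬝ᵥ ν = 0 := fun l hl => by
    rw [dotProduct_comm, ← hν]; exact hker (Submodule.subset_span hl)
  have hν0 : ν = 0 := hsalient ν
    (hC.mem_of_forall_dotDual fun l hl => (horth l hl).ge)
    (hC.mem_of_forall_dotDual fun l hl => by simp [horth l hl])
  exact hf0 (LinearMap.ext fun x => by simp [hν, hν0])

end IsClosedCone

lemma dotProduct_pos_of_mem_interior_dotDual {s : Set (ι → ℝ)} {l u : ι → ℝ}
    (hl : l ∈ interior (dotDual s)) (hu : u ∈ s) (hu0 : u ≠ 0) : 0 < l ⬝ᵥ u := by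
  have hnear : ∀ᶠ t in 𝓝 (0 : ℝ), l - t • u ∈ dotDual s :=
    (Continuous.tendsto' (by fun_prop) 0 l (by simp)) (mem_interior_iff_mem_nhds.1 hl)
  obtain ⟨t, ht, htpos⟩ := ((hnear.filter_mono nhdsWithin_le_nhds).and
    (self_mem_nhdsWithin (s := Ioi 0))).exists
  have huu : 0 < u ⬝ᵥ u := by simpa using dotProduct_self_star_pos_iff.2 hu0
  have := ht u hu
  rw [sub_dotProduct, smul_dotProduct, smul_eq_mul] at this
  nlinarith [mul_pos (mem_Ioi.1 htpos) huu]

theorem exists_mem_dotDual_forall_pos {K P : Set (ι → ℝ)} (hK : IsClosedCone K)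
    (hKsalient : ∀ x ∈ K, -x ∈ K → x = 0) (hP : IsClosedCone P)
    (hPK : ∀ p ∈ P, -p ∈ K → p = 0) :
    ∃ l ∈ dotDual P, ∀ u ∈ K, u ≠ 0 → 0 < l ⬝ᵥ u := by
  suffices h : (interior (dotDual K) ∩ dotDual P).Nonempty by
    obtain ⟨l, hlK, hlP⟩ := h
    exact ⟨l, hlP, fun u hu hu0 => dotProduct_pos_of_mem_interior_dotDual hlK hu hu0⟩
  by_contra hdisj
  obtain ⟨f, c, hf0, hfK, hfP⟩ := geometric_hahn_banach_of_nonempty_interior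
    (convex_dotDual K) (convex_dotDual P)
    (disjoint_iff_inter_eq_empty.2 (not_nonempty_iff_eq_empty.1 hdisj))
    (hK.interior_dotDual_nonempty hKsalient) ⟨0, zero_mem_dotDual P⟩
  obtain ⟨ν, hν⟩ := exists_dotProduct_eq (f : (ι → ℝ) →ₗ[ℝ] ℝ)
  have hνP : ν ∈ P := hP.mem_of_forall_dotDual fun l hl => by
    have := nonneg_of_forall_le_of_smul_mem smul_mem_dotDual (f : (ι → ℝ) →ₗ[ℝ] ℝ) hfP hl
    rwa [hν, dotProduct_comm] at this
  have hνK : -ν ∈ K := hK.mem_of_forall_dotDual fun l hl => by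
    have := nonneg_of_forall_le_of_smul_mem smul_mem_dotDual (-(f : (ι → ℝ) →ₗ[ℝ] ℝ))
      (fun l hl => neg_le_neg (hfK l hl)) hl
    rwa [LinearMap.neg_apply, hν, dotProduct_comm, ← dotProduct_neg] at this
  have hν0 : ν = 0 := hPK ν hνP hνK
  exact hf0 (ContinuousLinearMap.ext fun x => by simpa [hν0] using hν x)

end DotDual

section MatrixCones

lemma isClosedCone_mulVec_image_nonneg {ι κ : Type*} [Fintype ι] [Fintype κ] (M : Matrix ι κ ℝ) :
    IsClosedCone ((M *ᵥ ·) '' {x | 0 ≤ x}) where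
  isClosed := isClosed_image_nonneg M.mulVecLin
  convex := (convex_Ici (0 : κ → ℝ)).linear_image M.mulVecLin
  smul_mem c hc := by
    rintro _ ⟨x, hx, rfl⟩
    exact ⟨c • x, show 0 ≤ c • x from smul_nonneg hc hx, mulVec_smul M c x⟩
  zero_mem := ⟨0, show (0 : κ → ℝ) ≤ 0 from le_rfl, mulVec_zero M⟩

lemma IsClosedCone.preimage_mulVec {ι ι' : Type*} [Fintype ι'] {C : Set (ι → ℝ)}
    (hC : IsClosedCone C) (M : Matrix ι ι' ℝ) : IsClosedCone ((M *ᵥ ·) ⁻¹' C) where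
  isClosed := hC.isClosed.preimage M.mulVecLin.continuous_of_finiteDimensional
  convex := hC.convex.linear_preimage M.mulVecLin
  smul_mem c hc x hx := by simpa [mulVec_smul] using hC.smul_mem c hc _ hx
  zero_mem := by simpa using hC.zero_mem

lemma isClosedCone_mulVec_image_nonneg_ker {ι ι' κ : Type*} [Fintype ι] [Fintype ι'] [Fintype κ]
    (M : Matrix ι κ ℝ) (N : Matrix ι' κ ℝ) :
    IsClosedCone ((M *ᵥ ·) '' {x | 0 ≤ x ∧ N *ᵥ x = 0}) := by
  classical
  have hslice : (M *ᵥ ·) '' {x | 0 ≤ x ∧ N *ᵥ x = 0} =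
      (fromRows (1 : Matrix ι ι ℝ) 0 *ᵥ ·) ⁻¹' ((fromRows M N *ᵥ ·) '' {x | 0 ≤ x}) := by
    ext p
    simp only [mem_image, mem_ofPred_eq, mem_preimage, fromRows_mulVec, one_mulVec, zero_mulVec,
      Sum.elim_eq_iff]
    exact exists_congr fun x => by tauto
  rw [hslice]
  exact (isClosedCone_mulVec_image_nonneg _).preimage_mulVec _

end MatrixCones

section Homogenization

variable {ι κ : Type*}

def Matrix.homogenize (M : Matrix ι κ ℝ) (v : ι → ℝ) : Matrix ι (κ ⊕ Unit) ℝ :=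
  fromCols M (replicateCol Unit (-v))

lemma Matrix.homogenize_mulVec [Fintype κ] (M : Matrix ι κ ℝ) (v : ι → ℝ)
    (w : κ ⊕ Unit → ℝ) :
    M.homogenize v *ᵥ w = M *ᵥ (w ∘ Sum.inl) - w (Sum.inr ()) • v := by
  ext i
  simp [homogenize, mulVec, dotProduct, sub_eq_add_neg, mul_comm]

lemma Matrix.vecMul_homogenize [Fintype ι] (M : Matrix ι κ ℝ) (v y : ι → ℝ) :
    y ᵥ* M.homogenize v = Sum.elim (y ᵥ* M) fun _ => -(y ⬝ᵥ v) := by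
  ext (j | _)
  · simp [homogenize]
  · simp [homogenize, vecMul, dotProduct]

/-- The cone generated by `{x ≥ 0 | A x = b} - x₀` together with the recession directions of that
polyhedron; homogenizing with the scale `t` makes it a closed cone. -/
def feasibleCone [Fintype κ] (A : Matrix ι κ ℝ) (b : ι → ℝ) (x₀ : κ → ℝ) :
    Set (κ → ℝ) :=
  {d | ∃ (z : κ → ℝ) (t : ℝ), 0 ≤ z ∧ 0 ≤ t ∧ A *ᵥ z = t • b ∧ z - t • x₀ = d}

lemma feasibleCone_eq_image [Fintype κ] [DecidableEq κ] (A : Matrix ι κ ℝ) (b : ι → ℝ)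
    (x₀ : κ → ℝ) :
    feasibleCone A b x₀ =
      ((1 : Matrix κ κ ℝ).homogenize x₀ *ᵥ ·) '' {w | 0 ≤ w ∧ A.homogenize b *ᵥ w = 0} := by
  ext d
  simp only [feasibleCone, mem_image, mem_ofPred_eq, homogenize_mulVec, one_mulVec, sub_eq_zero]
  constructor
  · rintro ⟨z, t, hz, ht, hAz, rfl⟩
    exact ⟨Sum.elim z fun _ => t, ⟨by rintro (j | _); exacts [hz j, ht], by simpa⟩, by simp⟩
  · rintro ⟨w, ⟨hw, hAw⟩, rfl⟩
    exact ⟨w ∘ Sum.inl, w (Sum.inr ()), fun j => hw _, hw _, hAw, rfl⟩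

end Homogenization

section LinearProgramming

variable {ι κ : Type*} [Fintype ι] [Fintype κ]

lemma nonneg_vecMul_of_mem_dotDual {M : Matrix ι κ ℝ} {ν : ι → ℝ}
    (hν : ν ∈ dotDual ((M *ᵥ ·) '' {x | 0 ≤ x})) : 0 ≤ ν ᵥ* M := fun j => by
  classical
  have := hν _ ⟨Pi.single j 1, show (0 : κ → ℝ) ≤ Pi.single j 1 from
    Pi.single_nonneg.2 zero_le_one, rfl⟩
  rwa [dotProduct_mulVec, dotProduct_single, mul_one] at this

theorem exists_vecMul_le_of_forall_nonneg (B : Matrix ι κ ℝ) (d : κ → ℝ)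
    (h : ∀ w, 0 ≤ w → B *ᵥ w = 0 → 0 ≤ d ⬝ᵥ w) : ∃ y, y ᵥ* B ≤ d := by
  classical
  -- the column cone of `N` is `{Bᵀ y + s | s ≥ 0}`
  set N : Matrix κ ((ι ⊕ ι) ⊕ κ) ℝ := fromCols (fromCols Bᵀ (-Bᵀ)) 1
  by_cases hd : d ∈ (N *ᵥ ·) '' {x | 0 ≤ x}
  · obtain ⟨x, hx, rfl⟩ := hd
    set y := (x ∘ Sum.inl) ∘ Sum.inl - (x ∘ Sum.inl) ∘ Sum.inr
    have hNx : N *ᵥ x = y ᵥ* B + x ∘ Sum.inr := by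
      simp only [N, y, fromCols_mulVec, neg_mulVec, mulVec_transpose, sub_vecMul, one_mulVec]
      abel
    exact ⟨y, fun j => by simpa [hNx] using hx (Sum.inr j)⟩
  · obtain ⟨ν, hν, hνd⟩ :=
      (isClosedCone_mulVec_image_nonneg N).exists_mem_dotDual_dotProduct_neg hd
    have hN := nonneg_vecMul_of_mem_dotDual hν
    have hBν : B *ᵥ ν = 0 := funext fun i => le_antisymm
      (by simpa [N, vecMul_transpose, vecMul_neg] using hN (Sum.inl (Sum.inr i)))
      (by simpa [N, vecMul_transpose, vecMul_neg] using hN (Sum.inl (Sum.inl i)))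
    have hν0 : 0 ≤ ν := fun j => by simpa [N] using hN (Sum.inr j)
    exact absurd (h ν hν0 hBν) (by rw [dotProduct_comm]; exact hνd.not_ge)

theorem exists_vecMul_le_dotProduct_eq {A : Matrix ι κ ℝ} {b : ι → ℝ} {x₀ c : κ → ℝ}
    (hx₀ : 0 ≤ x₀) (hAx₀ : A *ᵥ x₀ = b) (hc : c ∈ dotDual (feasibleCone A b x₀)) :
    ∃ y, y ᵥ* A ≤ c ∧ y ⬝ᵥ b = c ⬝ᵥ x₀ := by
  classical
  obtain ⟨y, hy⟩ := exists_vecMul_le_of_forall_nonneg (A.homogenize b)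
    (c ᵥ* (1 : Matrix κ κ ℝ).homogenize x₀) fun w hw hAw => by
      rw [← dotProduct_mulVec]
      exact hc _ (feasibleCone_eq_image A b x₀ ▸ ⟨w, ⟨hw, hAw⟩, rfl⟩)
  rw [vecMul_homogenize, vecMul_homogenize, vecMul_one] at hy
  have hyA : y ᵥ* A ≤ c := fun j => hy (Sum.inl j)
  refine ⟨y, hyA, le_antisymm ?_ (by simpa using hy (Sum.inr ()))⟩
  calc y ⬝ᵥ b = y ᵥ* A ⬝ᵥ x₀ := by rw [← hAx₀, dotProduct_mulVec]
    _ ≤ c ⬝ᵥ x₀ := dotProduct_le_dotProduct_of_nonneg_right hyA hx₀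

end LinearProgramming

lemma exists_vecMul_eq {ι η : Type*} [Fintype ι] {l : ι → ℝ} (hl : l ≠ 0) (y : η → ℝ) :
    ∃ U : Matrix ι η ℝ, l ᵥ* U = y :=
  ⟨(l ⬝ᵥ l)⁻¹ • vecMulVec l y, by
    rw [vecMul_smul, vecMul_vecMulVec, smul_smul, inv_mul_cancel₀ (by simpa using hl), one_smul]⟩

section VectorLinearProgram

variable {ι κ η : Type*} [Fintype κ]
  (K : Set (ι → ℝ)) (L : Matrix ι κ ℝ) (A : Matrix η κ ℝ) (b : η → ℝ)

def IsEfficient (x₀ : κ → ℝ) : Prop :=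
  ¬ ∃ x : κ → ℝ, ((∀ i, 0 ≤ x i) ∧ A *ᵥ x = b) ∧
    L *ᵥ x₀ - L *ᵥ x ∈ K ∧ L *ᵥ x₀ - L *ᵥ x ≠ 0

variable {K L A b}

lemma IsEfficient.eq_zero_of_neg_mem {x₀ : κ → ℝ} (heff : IsEfficient K L A b x₀)
    (hK : ∀ c : ℝ, 0 ≤ c → ∀ x ∈ K, c • x ∈ K) (hx₀ : 0 ≤ x₀) (hAx₀ : A *ᵥ x₀ = b)
    {d : κ → ℝ} (hd : d ∈ feasibleCone A b x₀) (hLd : -(L *ᵥ d) ∈ K) : L *ᵥ d = 0 := by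
  obtain ⟨z, t, hz, ht, hAz, rfl⟩ := hd
  by_contra hne
  have ht₁ : 0 < 1 + t := by linarith
  have hgap : L *ᵥ x₀ - L *ᵥ ((1 + t)⁻¹ • (z + x₀)) = (1 + t)⁻¹ • -(L *ᵥ (z - t • x₀)) := by
    ext i
    simp only [mulVec_smul, mulVec_add, mulVec_sub, Pi.sub_apply, Pi.smul_apply, Pi.add_apply,
      Pi.neg_apply, smul_eq_mul]
    field_simp
    ring
  refine heff ⟨(1 + t)⁻¹ • (z + x₀), ⟨fun i => ?_, ?_⟩, ?_, ?_⟩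
  · exact mul_nonneg (inv_nonneg.2 ht₁.le) (add_nonneg (hz i) (hx₀ i))
  · rw [mulVec_smul, mulVec_add, hAz, hAx₀, show t • b + b = (1 + t) • b by module, smul_smul,
      inv_mul_cancel₀ ht₁.ne', one_smul]
  · rw [hgap]; exact hK _ (inv_nonneg.2 ht₁.le) _ hLd
  · rw [hgap]; simpa [ht₁.ne'] using hne

variable [Fintype ι] [Fintype η]

variable (K L A) in
/-- `(l, U, v) ∈ ℬ`, with `l ∈ K*⁰` read as strict positivity on `K \ {0}`. -/
def DualFeasible (l : ι → ℝ) (U : Matrix ι η ℝ) (v : ι → ℝ) : Prop :=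
  (∀ u ∈ K, u ≠ 0 → 0 < l ⬝ᵥ u) ∧ l ⬝ᵥ v = 0 ∧ ∀ i, 0 ≤ ((L - U * A)ᵀ *ᵥ l) i

lemma DualFeasible.dotProduct_le {l : ι → ℝ} {U : Matrix ι η ℝ} {v : ι → ℝ}
    (h : DualFeasible K L A l U v) {x : κ → ℝ} (hx : 0 ≤ x) (hAx : A *ᵥ x = b) :
    l ⬝ᵥ (U *ᵥ b + v) ≤ l ⬝ᵥ (L *ᵥ x) := by
  obtain ⟨-, hv, hLUA⟩ := h
  have := dotProduct_nonneg_of_nonneg (fun i => hLUA i) hx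
  rw [mulVec_transpose, ← dotProduct_mulVec, sub_mulVec, ← mulVec_mulVec, hAx,
    dotProduct_sub] at this
  rw [dotProduct_add, hv]
  linarith

lemma not_exists_dualFeasible_dominating {x : κ → ℝ} (hx : 0 ≤ x) (hAx : A *ᵥ x = b) :
    ¬ ∃ (l : ι → ℝ) (U : Matrix ι η ℝ) (v : ι → ℝ), DualFeasible K L A l U v ∧
      (U *ᵥ b + v) - L *ᵥ x ∈ K ∧ (U *ᵥ b + v) - L *ᵥ x ≠ 0 := by
  rintro ⟨l, U, v, h, hK, hne⟩
  have := h.1 _ hK hne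
  rw [dotProduct_sub] at this
  linarith [h.dotProduct_le hx hAx]

lemma dualFeasible_sub_mulVec {l : ι → ℝ} {U : Matrix ι η ℝ} {x₀ : κ → ℝ}
    (hpos : ∀ u ∈ K, u ≠ 0 → 0 < l ⬝ᵥ u) (hUA : (l ᵥ* U) ᵥ* A ≤ l ᵥ* L)
    (hUb : l ᵥ* U ⬝ᵥ b = l ᵥ* L ⬝ᵥ x₀) : DualFeasible K L A l U (L *ᵥ x₀ - U *ᵥ b) := by
  refine ⟨hpos, ?_, fun i => ?_⟩
  · rw [dotProduct_sub, dotProduct_mulVec, dotProduct_mulVec, hUb, sub_self]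
  · rw [mulVec_transpose, vecMul_sub, ← vecMul_vecMul, Pi.sub_apply, sub_nonneg]
    exact hUA i

end VectorLinearProgram

theorem stmt4_general (k n m : ℕ) (K : Set (Fin k → ℝ))
    (hKcone : ∀ (c : ℝ), 0 ≤ c → ∀ x ∈ K, c • x ∈ K)
    (hKclosed : IsClosed K) (hKconvex : Convex ℝ K)
    (hKpointed : K ∩ (-K) = {0})
    (hKne : K ≠ {0})
    (L : Matrix (Fin k) (Fin n) ℝ) (A : Matrix (Fin m) (Fin n) ℝ) (b : Fin m → ℝ)
    (xbar : Fin n → ℝ)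
    (hxbar : (∀ i, 0 ≤ xbar i) ∧ A *ᵥ xbar = b)
    (heff : ¬ ∃ x : Fin n → ℝ, ((∀ i, 0 ≤ x i) ∧ A *ᵥ x = b) ∧
      L *ᵥ xbar - L *ᵥ x ∈ K ∧ L *ᵥ xbar - L *ᵥ x ≠ 0) :
    ∃ (lbar : Fin k → ℝ) (Ubar : Matrix (Fin k) (Fin m) ℝ) (vbar : Fin k → ℝ),
      ((∀ u ∈ K, u ≠ 0 → 0 < lbar ⬝ᵥ u) ∧ lbar ⬝ᵥ vbar = 0 ∧
        ∀ i, 0 ≤ ((L - Ubar * A)ᵀ *ᵥ lbar) i) ∧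
      (¬ ∃ (l : Fin k → ℝ) (U : Matrix (Fin k) (Fin m) ℝ) (v : Fin k → ℝ),
        ((∀ u ∈ K, u ≠ 0 → 0 < l ⬝ᵥ u) ∧ l ⬝ᵥ v = 0 ∧
          ∀ i, 0 ≤ ((L - U * A)ᵀ *ᵥ l) i) ∧
        (U *ᵥ b + v) - (Ubar *ᵥ b + vbar) ∈ K ∧
        (U *ᵥ b + v) - (Ubar *ᵥ b + vbar) ≠ 0) ∧
      L *ᵥ xbar = Ubar *ᵥ b + vbar := by
  obtain ⟨hxbar0, hAxbar⟩ := hxbar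
  have h0K : (0 : Fin k → ℝ) ∈ K := (hKpointed.ge rfl).1
  have hK : IsClosedCone K := ⟨hKclosed, hKconvex, hKcone, h0K⟩
  have hP : IsClosedCone ((L *ᵥ ·) '' feasibleCone A b xbar) := by
    rw [feasibleCone_eq_image, image_image]
    simpa [mulVec_mulVec] using isClosedCone_mulVec_image_nonneg_ker _ _
  obtain ⟨lbar, hlP, hpos⟩ := exists_mem_dotDual_forall_pos hK
    (fun u hu hnu => hKpointed.le ⟨hu, hnu⟩) hP
    (by rintro _ ⟨d, hd, rfl⟩ hLd
        exact IsEfficient.eq_zero_of_neg_mem heff hKcone hxbar0 hAxbar hd hLd)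
  obtain ⟨y, hyA, hyb⟩ := exists_vecMul_le_dotProduct_eq hxbar0 hAxbar (c := lbar ᵥ* L)
    fun d hd => by rw [← dotProduct_mulVec]; exact hlP _ ⟨d, hd, rfl⟩
  obtain ⟨u₀, hu₀K, hu₀⟩ : ∃ u ∈ K, u ≠ 0 := by
    by_contra! h
    exact hKne (eq_singleton_iff_unique_mem.2 ⟨h0K, h⟩)
  have hlbar : lbar ≠ 0 := fun h => by simpa [h] using hpos u₀ hu₀K hu₀
  obtain ⟨Ubar, rfl⟩ := exists_vecMul_eq hlbar y
  have hval : Ubar *ᵥ b + (L *ᵥ xbar - Ubar *ᵥ b) = L *ᵥ xbar := add_sub_cancel _ _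
  refine ⟨lbar, Ubar, L *ᵥ xbar - Ubar *ᵥ b, dualFeasible_sub_mulVec hpos hyA hyb, ?_, hval.symm⟩
  rw [hval]
  exact not_exists_dualFeasible_dominating hxbar0 hAxbar

theorem stmt4 (k n m : ℕ) (K : Set (Fin k → ℝ))
    (hKcone : ∀ (c : ℝ), 0 ≤ c → ∀ x ∈ K, c • x ∈ K)
    (hKclosed : IsClosed K) (hKconvex : Convex ℝ K)
    (hKpointed : K ∩ (-K) = {0})
    (hKne : K ≠ {0}) (hKuniv : K ≠ Set.univ)
    (L : Matrix (Fin k) (Fin n) ℝ) (A : Matrix (Fin m) (Fin n) ℝ) (b : Fin m → ℝ)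
    (xbar : Fin n → ℝ)
    (hxbar : (∀ i, 0 ≤ xbar i) ∧ A *ᵥ xbar = b)
    (heff : ¬ ∃ x : Fin n → ℝ, ((∀ i, 0 ≤ x i) ∧ A *ᵥ x = b) ∧
      L *ᵥ xbar - L *ᵥ x ∈ K ∧ L *ᵥ xbar - L *ᵥ x ≠ 0) :
    ∃ (lbar : Fin k → ℝ) (Ubar : Matrix (Fin k) (Fin m) ℝ) (vbar : Fin k → ℝ),
      ((∀ u ∈ K, u ≠ 0 → 0 < lbar ⬝ᵥ u) ∧ lbar ⬝ᵥ vbar = 0 ∧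
        ∀ i, 0 ≤ ((L - Ubar * A)ᵀ *ᵥ lbar) i) ∧
      (¬ ∃ (l : Fin k → ℝ) (U : Matrix (Fin k) (Fin m) ℝ) (v : Fin k → ℝ),
        ((∀ u ∈ K, u ≠ 0 → 0 < l ⬝ᵥ u) ∧ l ⬝ᵥ v = 0 ∧
          ∀ i, 0 ≤ ((L - U * A)ᵀ *ᵥ l) i) ∧
        (U *ᵥ b + v) - (Ubar *ᵥ b + vbar) ∈ K ∧
        (U *ᵥ b + v) - (Ubar *ᵥ b + vbar) ≠ 0) ∧
      L *ᵥ xbar = Ubar *ᵥ b + vbar :=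
  stmt4_general k n m K hKcone hKclosed hKconvex hKpointed hKne L A b xbar hxbar heff
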